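/- Let G be a finite simple graph. A vertex v of G belongs to every MEG-set of G if and only if there exists a neighbor u of v such that every induced 2-path uvx (i.e., every vertex x adjacent to v with x ≠ u and x not adjacent to u) is part of a 4-cycle, meaning there exists a vertex w ≠ v adjacent to both u and x. -/

import Mathlib

open SimpleGraph

/-- A pair of vertices `u`, `v` monitors an edge `e` if `u` and `v` are reachable from
each other and `e` belongs to every shortest path (walk of length `G.dist u v`)
between `u` and `v`. -/
def Monitors {V : Type*} (G : SimpleGraph V) (u v : V) (e : Sym2 V) : Prop :=
  G.Reachable u v ∧ ∀ p : G.Walk u v, p.length = G.dist u v → e ∈ p.edges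

/-- A monitoring edge-geodetic set of `G`: every edge of `G` is monitored by some
pair of vertices of `M`. -/
def IsMEGSet {V : Type*} (G : SimpleGraph V) (M : Set V) : Prop :=
  ∀ e ∈ G.edgeSet, ∃ u ∈ M, ∃ v ∈ M, Monitors G u v e

/-- The monitoring edge-geodetic number of `G`: the minimum size of an MEG-set. -/
noncomputable def meg {V : Type*} [Fintype V] (G : SimpleGraph V) : ℕ :=
  sInf {n : ℕ | ∃ M : Finset V, IsMEGSet G ↑M ∧ M.card = n}

/-!
If every neighbour `u` of `v` starts an induced 2-path `u v x` on no 4-cycle, then `u v x` is the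
unique geodesic from `u` to `x`, so `u` and `x` monitor `uv`; since every other edge is monitored
by its endpoints, `V ∖ {v}` is an MEG-set. Conversely, let `u` be a neighbour of `v` such that
every induced 2-path `u v x` lies on a 4-cycle `u v x w`, and suppose `a, b ≠ v` monitor `uv`.
A geodesic from `a` through `u, v` to `b` continues to some `x` after `v`; as a subwalk of a
geodesic, `u v x` is induced, and replacing `v` by `w` gives a geodesic from `a` to `b` that
avoids `uv`.
-/

section

variable {V : Type*} {G : SimpleGraph V} {a b u v x : V} {e : Sym2 V}

/-- `u v x` is an induced 2-path that is part of no 4-cycle. -/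
def SimpleGraph.IsRigidTwoPath (G : SimpleGraph V) (u v x : V) : Prop :=
  G.Adj u v ∧ G.Adj v x ∧ x ≠ u ∧ ¬ G.Adj u x ∧ ∀ w, G.Adj u w → G.Adj w x → w = v

theorem SimpleGraph.Walk.IsSubwalk.reverse {u' v' : V} {p : G.Walk u v} {q : G.Walk u' v'}
    (h : p.IsSubwalk q) : p.reverse.IsSubwalk q.reverse := by
  obtain ⟨ru, rv, rfl⟩ := h
  exact ⟨rv.reverse, ru.reverse, by simp [Walk.append_assoc]⟩

theorem Monitors.symm (h : Monitors G a b e) : Monitors G b a e := by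
  refine ⟨h.1.symm, fun p hp => ?_⟩
  simpa using h.2 p.reverse (by rw [Walk.length_reverse, hp, dist_comm])

theorem monitors_of_adj (hab : G.Adj a b) : Monitors G a b s(a, b) := by
  refine ⟨hab.reachable, fun p hp => ?_⟩
  rw [dist_eq_one_iff_adj.mpr hab] at hp
  match p, hp with
  | .cons _ .nil, _ => simp

theorem SimpleGraph.IsRigidTwoPath.monitors (h : G.IsRigidTwoPath u v x) :
    Monitors G u x s(u, v) := by
  obtain ⟨huv, hvx, hxu, hux, hw⟩ := h
  have hreach : G.Reachable u x := (huv.toWalk.concat hvx).reachable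
  have hdist : G.dist u x = 2 :=
    le_antisymm (dist_le (huv.toWalk.concat hvx))
      (hreach.one_lt_dist_of_ne_of_not_adj hxu.symm hux)
  refine ⟨hreach, fun p hp => ?_⟩
  rw [hdist] at hp
  match p, hp with
  | .cons huw (.cons hwx .nil), _ =>
    obtain rfl := hw _ huw hwx
    exact List.mem_cons_self

theorem isMEGSet_compl_singleton (h : ∀ u, G.Adj u v → ∃ x, G.IsRigidTwoPath u v x) :
    IsMEGSet G {v}ᶜ := by
  intro e he
  induction e using Sym2.ind with
  | _ a b =>
    by_cases hav : a = v
    · subst hav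
      obtain ⟨x, hx⟩ := h b he.symm
      exact ⟨b, he.ne', x, hx.2.1.ne', Sym2.eq_swap ▸ hx.monitors⟩
    by_cases hbv : b = v
    · subst hbv
      obtain ⟨x, hx⟩ := h a he
      exact ⟨a, he.ne, x, hx.2.1.ne', hx.monitors⟩
    exact ⟨a, hav, b, hbv, monitors_of_adj he⟩

theorem Monitors.exists_isRigidTwoPath (hmon : Monitors G a b s(u, v)) {p : G.Walk a b}
    (hp : p.length = G.dist a b) (huv : G.Adj u v) (hsub : huv.toWalk.IsSubwalk p)
    (hbv : b ≠ v) : ∃ x, G.IsRigidTwoPath u v x := by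
  obtain ⟨ru, rv, rfl⟩ := hsub
  cases rv with
  | nil => exact absurd rfl hbv
  | @cons _ x _ hvx r =>
    have hgeo : ((ru.concat huv).append (.cons hvx r)).length = G.dist a b := by
      simpa [Walk.concat_eq_append] using hp
    have hpath := (ru.concat huv).append (.cons hvx r) |>.isPath_of_length_eq_dist hgeo
    have hvru : v ∉ ru.support := ((Walk.concat_isPath_iff huv).mp hpath.of_append_left).2
    have hvr : v ∉ r.support := ((Walk.cons_isPath_iff hvx r).mp hpath.of_append_right).2
    have hdist : G.dist u x = 2 := by
      have hsub : (huv.toWalk.concat hvx).IsSubwalk ((ru.concat huv).append (.cons hvx r)) :=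
        ⟨ru, r, by simp [Walk.concat_eq_append, ← Walk.append_assoc]⟩
      simpa using (length_eq_dist_of_subwalk hgeo hsub).symm
    refine ⟨x, huv, hvx, fun h => by simp [h] at hdist,
      fun h => by simp [dist_eq_one_iff_adj.mpr h] at hdist, fun w huw hwx => ?_⟩
    have hedge := hmon.2 (ru.append (.cons huw (.cons hwx r))) (by simp at hgeo ⊢; omega)
    simp only [Walk.edges_append, Walk.edges_cons, List.mem_append, List.mem_cons] at hedge
    rcases hedge with h | h | h | h
    · exact absurd (ru.snd_mem_support_of_mem_edges h) hvru
    · exact (Sym2.congr_right.mp h).symm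
    · rcases Sym2.eq_iff.mp h with ⟨-, rfl⟩ | ⟨-, rfl⟩
      · exact absurd rfl hvx.ne
      · rfl
    · exact absurd (r.snd_mem_support_of_mem_edges h) hvr

theorem not_monitors_of_forall_not_isRigidTwoPath (huv : G.Adj u v)
    (h : ∀ x, ¬ G.IsRigidTwoPath u v x) (hav : a ≠ v) (hbv : b ≠ v) :
    ¬ Monitors G a b s(u, v) := by
  intro hmon
  obtain ⟨p, hp⟩ := hmon.1.exists_walk_length_eq_dist
  rcases (Walk.isSubwalk_toWalk_iff_mem_edges huv).mpr (hmon.2 p hp) with hsub | hsub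
  · exact not_exists.mpr h (hmon.exists_isRigidTwoPath hp huv hsub hbv)
  · have hrev : p.reverse.length = G.dist b a := by simp [hp, dist_comm]
    have hsub' : huv.toWalk.IsSubwalk p.reverse := by simpa using hsub.reverse
    exact not_exists.mpr h (hmon.symm.exists_isRigidTwoPath hrev huv hsub' hav)

end

theorem mem_every_megSet_iff_general {V : Type*} (G : SimpleGraph V) (v : V) :
    (∀ M : Set V, IsMEGSet G M → v ∈ M) ↔
      ∃ u : V, G.Adj u v ∧
        ∀ x : V, G.Adj v x → x ≠ u → ¬ G.Adj u x →
          ∃ w : V, w ≠ v ∧ G.Adj u w ∧ G.Adj x w := by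
  constructor
  · intro hmem
    by_contra! hrigid
    refine hmem _ (isMEGSet_compl_singleton fun u huv => ?_) rfl
    obtain ⟨x, hvx, hxu, hux, hw⟩ := hrigid u huv
    exact ⟨x, huv, hvx, hxu, hux, fun w huw hwx => by_contra fun hwv => hw w hwv huw hwx.symm⟩
  · rintro ⟨u, huv, hcycle⟩ M hM
    obtain ⟨a, haM, b, hbM, hmon⟩ := hM s(u, v) huv
    by_contra hvM
    refine not_monitors_of_forall_not_isRigidTwoPath huv ?_ (ne_of_mem_of_not_mem haM hvM)
      (ne_of_mem_of_not_mem hbM hvM) hmon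
    rintro x ⟨-, hvx, hxu, hux, hw⟩
    obtain ⟨w, hwv, huw, hxw⟩ := hcycle x hvx hxu hux
    exact hwv (hw w huw hxw.symm)

/-- a vertex `v` belongs to every MEG-set of `G` iff it has a neighbor `u`
such that every induced 2-path `u-v-x` is part of a 4-cycle. -/
theorem mem_every_megSet_iff {V : Type*} [Fintype V] (G : SimpleGraph V) (v : V) :
    (∀ M : Set V, IsMEGSet G M → v ∈ M) ↔
      ∃ u : V, G.Adj u v ∧
        ∀ x : V, G.Adj v x → x ≠ u → ¬ G.Adj u x →
          ∃ w : V, w ≠ v ∧ G.Adj u w ∧ G.Adj x w :=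
  mem_every_megSet_iff_general G v
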